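/- For all n ≥ 1, k ≥ 2 and d with 0 ≤ d ≤ n+k and d ≡ n+k (mod 2), the inequality dim S_{n,k}^d ≤ dim S_{n+k}^d holds, where dim S_{n,k}^d = binom(n, (n+k−d)/2) − binom(n, (n−k−d−2)/2) and dim S_{n+k}^d = binom(n+k, (n+k−d)/2) − binom(n+k, (n+k−d−2)/2). -/
import Mathlib


/-- The binomial coefficient `binom(n,k)` for `k : ℤ`, set to `0` when `k < 0`. -/
def binomZ (n : ℕ) (k : ℤ) : ℤ :=
  if k < 0 then 0 else (n.choose k.toNat : ℤ)

lemma binomZ_nonneg (n : ℕ) (j : ℤ) : 0 ≤ binomZ n j := by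
  unfold binomZ; split <;> positivity

lemma binomZ_eq_zero_of_gt {n : ℕ} {j : ℤ} (h : (n : ℤ) < j) : binomZ n j = 0 := by
  unfold binomZ
  rw [if_neg (by omega)]
  have : n < j.toNat := by omega
  simp [Nat.choose_eq_zero_of_lt this]

lemma binomZ_symm (n : ℕ) (a : ℤ) : binomZ n a = binomZ n ((n : ℤ) - a) := by
  rcases lt_or_ge a 0 with ha | ha
  · have h1 : binomZ n a = 0 := by unfold binomZ; rw [if_pos ha]
    have h2 : binomZ n ((n : ℤ) - a) = 0 := binomZ_eq_zero_of_gt (by omega)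
    rw [h1, h2]
  · rcases le_or_gt a n with han | han
    · unfold binomZ
      rw [if_neg (by omega), if_neg (by omega)]
      have h1 : ((n : ℤ) - a).toNat = n - a.toNat := by omega
      rw [h1, Nat.choose_symm (by omega)]
    · have h1 : binomZ n a = 0 := binomZ_eq_zero_of_gt han
      have h2 : binomZ n ((n : ℤ) - a) = 0 := by unfold binomZ; rw [if_pos (by omega)]
      rw [h1, h2]

lemma binomZ_pascal (n : ℕ) (j : ℤ) :
    binomZ (n + 1) j = binomZ n j + binomZ n (j - 1) := by
  rcases lt_or_ge j 0 with hj | hj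
  · unfold binomZ; rw [if_pos hj, if_pos hj, if_pos (by omega)]; ring
  · rcases eq_or_lt_of_le hj with hj0 | hj0
    · unfold binomZ
      rw [if_neg (by omega), if_neg (by omega), if_pos (by omega)]
      simp [← hj0]
    · unfold binomZ
      rw [if_neg (by omega), if_neg (by omega), if_neg (by omega)]
      have h1 : j.toNat = (j - 1).toNat + 1 := by omega
      rw [h1, Nat.choose_succ_succ]
      push_cast; ring

lemma nat_choose_mono_half {n a b : ℕ} (hab : a ≤ b) (hb : 2 * b ≤ n) :
    n.choose a ≤ n.choose b := by
  induction b with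
  | zero => simp [Nat.le_zero.mp hab]
  | succ b ih =>
    rcases eq_or_lt_of_le hab with h | h
    · rw [h]
    · have h1 : n.choose a ≤ n.choose b := ih (by omega) (by omega)
      have h2 : n.choose b ≤ n.choose (b + 1) :=
        Nat.choose_le_succ_of_lt_half_left (by omega)
      exact h1.trans h2

lemma nat_choose_mono {n a b : ℕ} (hab : a ≤ b) (h : a + b ≤ n) :
    n.choose a ≤ n.choose b := by
  rcases le_or_gt (2 * b) n with hb | hb
  · exact nat_choose_mono_half hab hb
  · have hbn : b ≤ n := by omega
    calc n.choose a ≤ n.choose (n - b) := nat_choose_mono_half (by omega) (by omega)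
      _ = n.choose b := Nat.choose_symm hbn

lemma binomZ_mono {n : ℕ} {a b : ℤ} (hab : a ≤ b) (h : a + b ≤ (n : ℤ)) :
    binomZ n a ≤ binomZ n b := by
  rcases lt_or_ge a 0 with ha | ha
  · calc binomZ n a = 0 := by unfold binomZ; rw [if_pos ha]
      _ ≤ binomZ n b := binomZ_nonneg n b
  · unfold binomZ
    rw [if_neg (by omega), if_neg (by omega)]
    exact_mod_cast nat_choose_mono (by omega) (by omega)

lemma key (k : ℕ) : ∀ (n : ℕ) (j : ℤ), 2 * j ≤ (n : ℤ) + k + 1 →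
    binomZ n j - binomZ n (j - k - 1) ≤ binomZ (n + k) j - binomZ (n + k) (j - 1) := by
  induction k with
  | zero => intro n j _; push_cast; simp
  | succ k ih =>
    intro n j hj
    push_cast at hj ⊢
    rcases le_or_gt (2 * j) ((n : ℤ) + k + 1) with h2 | h2
    · have h1 := ih n j h2
      have h3 := ih n (j - 1) (by push_cast; omega)
      have e1 : (j - 1) - (k : ℤ) - 1 = j - (k + 1) - 1 := by ring
      rw [e1] at h3
      have hm : binomZ n (j - k - 1) ≤ binomZ n (j - 1) :=
        binomZ_mono (by omega) (by omega)
      have hp1 : binomZ (n + k + 1) j = binomZ (n + k) j + binomZ (n + k) (j - 1) :=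
        binomZ_pascal (n + k) j
      have hp2 : binomZ (n + k + 1) (j - 1) =
          binomZ (n + k) (j - 1) + binomZ (n + k) (j - 1 - 1) := binomZ_pascal (n + k) (j - 1)
      have e2 : j - 1 - 1 = j - 2 := by ring
      rw [e2] at hp2
      have egoal : n + (k + 1) = n + k + 1 := by ring
      rw [egoal, hp1, hp2]
      have e3 : (j - 1) - 1 = j - 2 := by ring
      rw [e3] at h3
      linarith
    · -- 2 * j = n + k + 2 : both sides are 0
      have h2j : 2 * j = (n : ℤ) + k + 2 := by omega
      have hL : binomZ n (j - (k + 1) - 1) = binomZ n j := by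
        rw [binomZ_symm n (j - (k + 1) - 1)]
        congr 1; omega
      have hR : binomZ (n + (k + 1)) (j - 1) = binomZ (n + (k + 1)) j := by
        rw [binomZ_symm (n + (k + 1)) (j - 1)]
        congr 1; push_cast; omega
      rw [hL, hR]
      simp

/-- For all `n ≥ 1`, `k ≥ 2` and `d` with `0 ≤ d ≤ n+k` and `d ≡ n+k (mod 2)`,
`dim S_{n,k}^d = binom(n,(n+k−d)/2) − binom(n,(n−k−d−2)/2)` is at most
`dim S_{n+k}^d = binom(n+k,(n+k−d)/2) − binom(n+k,(n+k−d−2)/2)`. -/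
theorem dimSeam_le_dimTL (n k d : ℕ) (hn : 1 ≤ n) (hk : 2 ≤ k) (hd : d ≤ n + k)
    (hpar : d % 2 = (n + k) % 2) :
    binomZ n (((n : ℤ) + k - d) / 2) - binomZ n (((n : ℤ) - k - d - 2) / 2)
      ≤ binomZ (n + k) (((n : ℤ) + k - d) / 2)
        - binomZ (n + k) (((n : ℤ) + k - d - 2) / 2) := by
  have heven : (2 : ℤ) ∣ ((n : ℤ) + k - d) := by omega
  obtain ⟨j, hj⟩ := heven
  have e1 : ((n : ℤ) + k - d) / 2 = j := by rw [hj]; exact Int.mul_ediv_cancel_left j (by norm_num)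
  have e2 : ((n : ℤ) - k - d - 2) / 2 = j - k - 1 := by
    have : (n : ℤ) - k - d - 2 = 2 * (j - k - 1) := by omega
    rw [this]; exact Int.mul_ediv_cancel_left _ (by norm_num)
  have e3 : ((n : ℤ) + k - d - 2) / 2 = j - 1 := by
    have : (n : ℤ) + k - d - 2 = 2 * (j - 1) := by omega
    rw [this]; exact Int.mul_ediv_cancel_left _ (by norm_num)
  rw [e1, e2, e3]
  exact key k n j (by omega)
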